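/- arXiv:2411.07253 — 2 statements merged into one kernel-verified Lean document; each statement's English description precedes it below -/
import Mathlib

section
/- Let gᵢ : ℝⁿ → ℝ be convex and fᵢ differentiable for i ∈ [m], and let d^k minimize d ↦ max_{i∈[m]} {(⟨∇fᵢ(x^k), d⟩ + gᵢ(x^k + d) − gᵢ(x^k))/αᵢ^k + (1/2)‖d‖²} with αᵢ^k > 0. Then for every i ∈ [m], ⟨∇fᵢ(x^k), d^k⟩ + gᵢ(x^k + d^k) − gᵢ(x^k) ≤ −αᵢ^k ‖d^k‖². -/
open Finset RealInnerProductSpace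

/-- The minimizer `dᵏ` of the scaled proximal-gradient subproblem is a descent
direction: `⟨∇fᵢ(xᵏ), dᵏ⟩ + gᵢ(xᵏ + dᵏ) − gᵢ(xᵏ) ≤ −αᵢᵏ‖dᵏ‖²` for all `i`. -/
theorem descent_direction {n m : ℕ} (hne : (univ : Finset (Fin m)).Nonempty)
    (xk : EuclideanSpace ℝ (Fin n)) (gradf : Fin m → EuclideanSpace ℝ (Fin n))
    (g : Fin m → EuclideanSpace ℝ (Fin n) → ℝ) (α : Fin m → ℝ)
    (hα : ∀ i, 0 < α i) (hg : ∀ i, ConvexOn ℝ Set.univ (g i))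
    (dk : EuclideanSpace ℝ (Fin n))
    (hdk : IsMinOn (fun d : EuclideanSpace ℝ (Fin n) =>
      univ.sup' hne (fun i =>
        (⟪gradf i, d⟫ + g i (xk + d) - g i xk) / α i + 1 / 2 * ‖d‖ ^ 2)) Set.univ dk) :
    ∀ i, ⟪gradf i, dk⟫ + g i (xk + dk) - g i xk ≤ -(α i) * ‖dk‖ ^ 2 := by
  set q : ℝ := ‖dk‖ ^ 2 with hq
  have hq0 : 0 ≤ q := by positivity
  set A : Fin m → ℝ := fun i => ⟪gradf i, dk⟫ + g i (xk + dk) - g i xk with hA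
  set M : ℝ := univ.sup' hne (fun i => A i / α i) with hM
  -- Step 1 : φ(dk) = M + q/2
  have hφdk : univ.sup' hne (fun i =>
      (⟪gradf i, dk⟫ + g i (xk + dk) - g i xk) / α i + 1 / 2 * ‖dk‖ ^ 2)
      = M + 1 / 2 * q := by
    rw [hM, Finset.sup'_add univ (fun i => A i / α i) (1 / 2 * q) hne]
  -- Step 2 : for t ∈ (0,1), M ≤ -(1+t)/2 * q
  have key : ∀ t : ℝ, 0 < t → t < 1 → M ≤ -(1 + t) / 2 * q := by
    intro t ht0 ht1
    have hmin := isMinOn_iff.mp hdk (t • dk) (Set.mem_univ _)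
    have hconv : ∀ i, g i (xk + t • dk) - g i xk ≤ t * (g i (xk + dk) - g i xk) := by
      intro i
      have h := (hg i).2 (Set.mem_univ xk) (Set.mem_univ (xk + dk))
        (by linarith : (0:ℝ) ≤ 1 - t) (le_of_lt ht0) (by ring)
      have heq : (1 - t) • xk + t • (xk + dk) = xk + t • dk := by
        module
      rw [heq] at h
      simp only [smul_eq_mul] at h
      nlinarith [h]
    have hnorm : ‖t • dk‖ ^ 2 = t ^ 2 * q := by
      rw [norm_smul, mul_pow, hq, Real.norm_eq_abs, sq_abs]
    have hup : univ.sup' hne (fun i =>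
        (⟪gradf i, t • dk⟫ + g i (xk + t • dk) - g i xk) / α i + 1 / 2 * ‖t • dk‖ ^ 2)
        ≤ t * M + 1 / 2 * (t ^ 2 * q) := by
      apply Finset.sup'_le
      intro i _
      have hin : ⟪gradf i, t • dk⟫ = t * ⟪gradf i, dk⟫ := real_inner_smul_right _ _ _
      have h1 : (⟪gradf i, t • dk⟫ + g i (xk + t • dk) - g i xk) / α i ≤ t * (A i / α i) := by
        rw [hin, div_le_iff₀ (hα i)]
        have h2 := hconv i
        have h3 : t * (A i / α i) * α i = t * A i := by
          rw [mul_assoc, div_mul_cancel₀ _ (hα i).ne']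
        rw [h3]
        have hAi : A i = ⟪gradf i, dk⟫ + g i (xk + dk) - g i xk := rfl
        rw [hAi]
        nlinarith [h2, ht0]
      have h4 : A i / α i ≤ M := Finset.le_sup' (fun i => A i / α i) (Finset.mem_univ i)
      have h5 : t * (A i / α i) ≤ t * M := by nlinarith
      rw [hnorm]
      linarith
    rw [hφdk] at hmin
    have hcomb : M + 1 / 2 * q ≤ t * M + 1 / 2 * (t ^ 2 * q) := le_trans hmin hup
    -- (1-t) M ≤ (t² - 1)/2 q, divide by 1-t > 0
    have ht1' : 0 < 1 - t := by linarith
    nlinarith [hcomb]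
  -- Step 3 : M ≤ -q
  have hMq : M ≤ -q := by
    apply le_of_forall_pos_le_add
    intro ε hε
    rcases le_or_gt q (2 * ε) with hcase | hcase
    · have := key (1/2) (by norm_num) (by norm_num)
      nlinarith
    · have hqpos : 0 < q := by linarith
      have htset : 0 < 1 - ε / q ∧ 1 - ε / q < 1 := by
        constructor
        · have : ε / q < 1 := by
            rw [div_lt_one hqpos]; linarith
          linarith
        · have : 0 < ε / q := div_pos hε hqpos
          linarith
      have := key (1 - ε / q) htset.1 htset.2
      have heq : -(1 + (1 - ε / q)) / 2 * q = -q + ε / 2 := by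
        field_simp; ring
      rw [heq] at this
      linarith
  -- Conclusion
  intro i
  have h4 : A i / α i ≤ M := Finset.le_sup' (fun i => A i / α i) (Finset.mem_univ i)
  have h5 : A i ≤ M * α i := (div_le_iff₀ (hα i)).mp h4
  have h6 : M * α i ≤ α i * (-q) := by
    have := hα i; nlinarith
  show A i ≤ -(α i) * q
  nlinarith
end

section
/- Let 0 < σ < 1, 0 < μᵢ ≤ Lᵢ for all i ∈ [m], and αᵢ^k > 0. With t_k^min and r_k as in the previous context, and α_min^k := min_i αᵢ^k, α_max^k := max_i αᵢ^k, μ_min := min_i μᵢ, L_max := max_i Lᵢ, one has t_k^min · r_k ≥ (1−σ)·min{ (α_min^k μ_min)/(α_max^k L_max), α_min^k/L_max, μ_min/α_max^k }. -/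
open Finset

/-- Lower bound of Theorem 5.5(i):
`t_k^min · r_k ≥ (1−σ)·min {(α_min μ_min)/(α_max L_max), α_min/L_max, μ_min/α_max}`. -/
theorem tmin_rk_lower_bound {m : ℕ} (hne : (univ : Finset (Fin m)).Nonempty)
    (σ : ℝ) (hσ : σ ∈ Set.Ioo (0 : ℝ) 1) (μ L α : Fin m → ℝ)
    (hμ : ∀ i, 0 < μ i) (hμL : ∀ i, μ i ≤ L i) (hα : ∀ i, 0 < α i) :
    (1 - σ) * min (min
        ((univ.inf' hne α * univ.inf' hne μ) / (univ.sup' hne α * univ.sup' hne L))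
        (univ.inf' hne α / univ.sup' hne L))
        (univ.inf' hne μ / univ.sup' hne α) ≤
      min (univ.inf' hne (fun i => (1 - σ) * α i / L i)) 1 *
        min (univ.inf' hne (fun i => μ i / α i)) 1 := by
  obtain ⟨hσ0, hσ1⟩ := hσ
  set A := univ.inf' hne α with hAdef
  set Mu := univ.inf' hne μ with hMudef
  set S := univ.sup' hne α with hSdef
  set LL := univ.sup' hne L with hLLdef
  obtain ⟨j, hj⟩ := id hne
  have hL : ∀ i, 0 < L i := fun i => lt_of_lt_of_le (hμ i) (hμL i)
  have hA : 0 < A := (Finset.lt_inf'_iff hne).2 fun i _ => hα i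
  have hMu : 0 < Mu := (Finset.lt_inf'_iff hne).2 fun i _ => hμ i
  have hS : 0 < S := lt_of_lt_of_le (hα j) (Finset.le_sup' α hj)
  have hLL : 0 < LL := lt_of_lt_of_le (hL j) (Finset.le_sup' L hj)
  have hAS : A ≤ S := le_trans (Finset.inf'_le α hj) (Finset.le_sup' α hj)
  have hMuLL : Mu ≤ LL :=
    le_trans (Finset.inf'_le μ hj) (le_trans (hμL j) (Finset.le_sup' L hj))
  set x := (1 - σ) * A / LL with hxdef
  set y := Mu / S with hydef
  have hx : 0 < x := div_pos (mul_pos (by linarith) hA) hLL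
  have hy : 0 < y := by positivity
  have h1 : min x 1 ≤ min (univ.inf' hne (fun i => (1 - σ) * α i / L i)) 1 := by
    refine min_le_min ?_ le_rfl
    refine Finset.le_inf' hne _ fun i _ => ?_
    rw [hxdef]
    apply div_le_div₀ (mul_nonneg (by linarith) (le_of_lt (hα i)))
    · have := Finset.inf'_le α (Finset.mem_univ i)
      nlinarith
    · exact hL i
    · exact Finset.le_sup' L (Finset.mem_univ i)
  have h2 : min y 1 ≤ min (univ.inf' hne (fun i => μ i / α i)) 1 := by
    refine min_le_min ?_ le_rfl
    refine Finset.le_inf' hne _ fun i _ => ?_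
    rw [hydef]
    exact div_le_div₀ (le_of_lt (hμ i)) (Finset.inf'_le μ (Finset.mem_univ i)) (hα i)
      (Finset.le_sup' α (Finset.mem_univ i))
  have hcore : (1 - σ) * min (min (A * Mu / (S * LL)) (A / LL)) (Mu / S)
      ≤ min x 1 * min y 1 := by
    have hm1 : min (min (A * Mu / (S * LL)) (A / LL)) (Mu / S) ≤ A * Mu / (S * LL) :=
      le_trans (min_le_left _ _) (min_le_left _ _)
    have hm2 : min (min (A * Mu / (S * LL)) (A / LL)) (Mu / S) ≤ A / LL :=
      le_trans (min_le_left _ _) (min_le_right _ _)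
    have hm3 : min (min (A * Mu / (S * LL)) (A / LL)) (Mu / S) ≤ Mu / S :=
      min_le_right _ _
    have hm0 : 0 < min (min (A * Mu / (S * LL)) (A / LL)) (Mu / S) := by positivity
    rcases le_or_gt x 1 with hx1 | hx1 <;> rcases le_or_gt y 1 with hy1 | hy1
    · rw [min_eq_left hx1, min_eq_left hy1]
      have hxy : x * y = (1 - σ) * (A * Mu / (S * LL)) := by
        rw [hxdef, hydef]; field_simp
      rw [hxy]
      exact mul_le_mul_of_nonneg_left hm1 (by linarith)
    · rw [min_eq_left hx1, min_eq_right (le_of_lt hy1), mul_one]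
      calc (1 - σ) * min (min (A * Mu / (S * LL)) (A / LL)) (Mu / S)
          ≤ (1 - σ) * (A / LL) := mul_le_mul_of_nonneg_left hm2 (by linarith)
        _ = x := by rw [hxdef, mul_div_assoc]
    · rw [min_eq_right (le_of_lt hx1), min_eq_left hy1, one_mul]
      calc (1 - σ) * min (min (A * Mu / (S * LL)) (A / LL)) (Mu / S)
          ≤ (1 - σ) * (Mu / S) := mul_le_mul_of_nonneg_left hm3 (by linarith)
        _ ≤ Mu / S := by nlinarith
    · rw [min_eq_right (le_of_lt hx1), min_eq_right (le_of_lt hy1), one_mul]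
      have hterm1 : A * Mu / (S * LL) ≤ 1 := by
        rw [div_le_one (by positivity)]
        nlinarith
      nlinarith
  calc (1 - σ) * min (min (A * Mu / (S * LL)) (A / LL)) (Mu / S)
      ≤ min x 1 * min y 1 := hcore
    _ ≤ _ := mul_le_mul h1 h2 (le_min (le_of_lt hy) zero_le_one)
        (le_trans (le_min (le_of_lt hx) zero_le_one) h1)
end
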